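/- Let μ be a probability vector on ℕ₀ with μ₀ ∈ (0,1) and suppose #V_μ^c(ℕ₀) < ∞ almost surely. Then there exists α ∈ (0,∞) such that E[exp(α · #V_μ^c(ℕ₀))] < ∞. -/

import Mathlib

open MeasureTheory ProbabilityTheory
open scoped ENNReal Classical

namespace BP

set_option linter.unusedSectionVars false
variable {Ω : Type*} [MeasurableSpace Ω] (Y : ℕ → Ω → ℕ)

/-- The uncovered set. -/
def unc (ω : Ω) : Set ℕ := {m | ∀ k ≤ m, Y k ω + k ≤ m}

/-- Number of uncovered points `≤ m`. -/
noncomputable def psi (m : ℕ) (ω : Ω) : ℕ :=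
  ((Finset.Iic m).filter (fun x => x ∈ unc Y ω)).card

/-- `m` is the `(n+1)`-th uncovered point. -/
def G (n m : ℕ) : Set Ω := {ω | m ∈ unc Y ω ∧ psi Y m ω = n + 1}

/-- `m + j` would be uncovered given that `m` is. -/
def C (m j : ℕ) : Set Ω := {ω | ∀ i, 1 ≤ i → i ≤ j → Y (m + i) ω + i ≤ j}

/-- Some point after `m` would be uncovered given that `m` is. -/
def B (m : ℕ) : Set Ω := ⋃ j, ⋃ (_ : 1 ≤ j), C Y m j

/-- Truncated version of `B`. -/
def Ecal (m J : ℕ) : Set Ω := ⋃ j, ⋃ (_ : 1 ≤ j ∧ j ≤ J), C Y m j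

/-- At least `n+1` uncovered points. -/
def D (n : ℕ) : Set Ω := ⋃ m, G Y n m

variable {Y}

lemma psi_coe (m : ℕ) (ω : Ω) :
    (↑((Finset.Iic m).filter (fun x => x ∈ unc Y ω)) : Set ℕ) = unc Y ω ∩ Set.Iic m := by
  ext x; simp [Finset.mem_filter, and_comm]

lemma psi_eq_ncard (m : ℕ) (ω : Ω) : psi Y m ω = (unc Y ω ∩ Set.Iic m).ncard := by
  rw [← psi_coe, Set.ncard_coe_finset]; rfl

lemma psi_succ_cases (m : ℕ) (ω : Ω) :
    (m + 1 ∈ unc Y ω ∧ psi Y (m+1) ω = psi Y m ω + 1) ∨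
    (m + 1 ∉ unc Y ω ∧ psi Y (m+1) ω = psi Y m ω) := by
  have h : Finset.Iic (m+1) = insert (m+1) (Finset.Iic m) := by
    ext x; simp [Nat.lt_succ_iff, Nat.le_succ_iff]; omega
  by_cases hm : m + 1 ∈ unc Y ω
  · left
    refine ⟨hm, ?_⟩
    rw [psi, h, Finset.filter_insert, if_pos hm, Finset.card_insert_of_notMem]
    · rfl
    · simp
  · right
    refine ⟨hm, ?_⟩
    rw [psi, h, Finset.filter_insert, if_neg hm]; rfl

lemma psi_zero_le (ω : Ω) : psi Y 0 ω ≤ 1 := by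
  have : ((Finset.Iic 0).filter (fun x => x ∈ unc Y ω)).card ≤ (Finset.Iic 0).card :=
    Finset.card_filter_le _ _
  simpa [psi] using this

lemma mem_unc_of_psi_zero (ω : Ω) (h : psi Y 0 ω = 1) : 0 ∈ unc Y ω := by
  by_contra h0
  have : (Finset.Iic 0).filter (fun x => x ∈ unc Y ω) = ∅ := by
    ext x; simp only [Finset.mem_Iic, Nat.le_zero, Finset.mem_filter, Finset.notMem_empty,
      iff_false, not_and]
    rintro rfl; exact h0
  simp [psi, this] at h

/-- Key combinatorial lemma: if at least `n+1` uncovered points up to `M`,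
then some `m ≤ M` is the `(n+1)`-th uncovered point. -/
lemma exists_G {ω : Ω} {n M : ℕ} (h : n + 1 ≤ psi Y M ω) :
    ∃ m ≤ M, ω ∈ G Y n m := by
  induction M with
  | zero =>
      have h1 := psi_zero_le (Y := Y) ω
      have hn : n = 0 := by omega
      have hψ : psi Y 0 ω = 1 := by omega
      exact ⟨0, le_rfl, ⟨mem_unc_of_psi_zero ω hψ, by omega⟩⟩
  | succ M ih =>
      by_cases hM : n + 1 ≤ psi Y M ω
      · obtain ⟨m, hm, hG⟩ := ih hM
        exact ⟨m, hm.trans (Nat.le_succ M), hG⟩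
      · rcases psi_succ_cases (Y := Y) M ω with ⟨hmem, heq⟩ | ⟨_, heq⟩
        · refine ⟨M + 1, le_rfl, hmem, ?_⟩
          omega
        · omega

lemma psi_mono {ω : Ω} : Monotone (fun m => psi Y m ω) := by
  intro a b hab
  exact Finset.card_le_card (Finset.filter_subset_filter _ (by intro x; simp only [Finset.mem_Iic]; omega))

lemma unc_finite_iff (ω : Ω) :
    (unc Y ω).Finite ↔ ∃ M, ∀ x, M < x → x ∉ unc Y ω := by
  constructor
  · intro hf
    rcases hf.bddAbove with ⟨M, hM⟩
    exact ⟨M, fun x hx hmem => absurd (hM hmem) (by omega)⟩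
  · rintro ⟨M, hM⟩
    apply Set.Finite.subset (Set.finite_Iic M)
    intro x hx
    by_contra hxM
    exact hM x (by simpa using hxM) hx

/-- Pairwise disjointness of the `G n m` over `m`. -/
lemma G_disjoint (n : ℕ) : Pairwise (Function.onFun Disjoint (fun m => G Y n m)) := by
  intro m m' hne
  wlog hlt : m < m' generalizing m m'
  · exact (this hne.symm (by omega)).symm
  simp only [Function.onFun, Set.disjoint_left]
  rintro ω ⟨hm, hψ⟩ ⟨hm', hψ'⟩
  have h1 : psi Y m ω + 1 ≤ psi Y m' ω := by
    have hsub : insert m' ((Finset.Iic m).filter (fun x => x ∈ unc Y ω)) ⊆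
        (Finset.Iic m').filter (fun x => x ∈ unc Y ω) := by
      intro x hx
      rcases Finset.mem_insert.mp hx with rfl | hx
      · simp [hm']
      · simp only [Finset.mem_filter, Finset.mem_Iic] at hx ⊢
        exact ⟨by omega, hx.2⟩
    have := Finset.card_le_card hsub
    rwa [Finset.card_insert_of_notMem (by simp; omega)] at this
  omega

/-- The recursion identity. -/
lemma D_succ_eq (n : ℕ) : D Y (n+1) = ⋃ m, (G Y n m ∩ B Y m) := by
  ext ω
  simp only [D, Set.mem_iUnion, Set.mem_inter_iff]
  constructor
  · rintro ⟨m', hm', hψ'⟩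
    obtain ⟨m, hmle, hG⟩ := exists_G (Y := Y) (ω := ω) (n := n) (M := m') (by omega)
    have hmlt : m < m' := by
      rcases Nat.lt_or_ge m m' with h | h
      · exact h
      · exfalso; have : m = m' := by omega
        subst this; exact absurd hG.2 (by omega)
    refine ⟨m, hG, ?_⟩
    refine Set.mem_iUnion.mpr ⟨m' - m, Set.mem_iUnion.mpr ⟨by omega, ?_⟩⟩
    intro i hi1 hij
    have := hm' (m + i) (by omega)
    omega
  · rintro ⟨m, hG, hB⟩
    simp only [B, Set.mem_iUnion] at hB
    obtain ⟨j, hj1, hC⟩ := hB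
    have hmem : m + j ∈ unc Y ω := by
      intro k hk
      rcases Nat.lt_or_ge m k with h | h
      · have := hC (k - m) (by omega) (by omega)
        have hk' : m + (k - m) = k := by omega
        rw [hk'] at this; omega
      · have := hG.1 k h; omega
    have hψ : n + 2 ≤ psi Y (m + j) ω := by
      have hsub : insert (m + j) ((Finset.Iic m).filter (fun x => x ∈ unc Y ω)) ⊆
          (Finset.Iic (m + j)).filter (fun x => x ∈ unc Y ω) := by
        intro x hx
        rcases Finset.mem_insert.mp hx with rfl | hx
        · simp [hmem]
        · simp only [Finset.mem_filter, Finset.mem_Iic] at hx ⊢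
          exact ⟨by omega, hx.2⟩
      have hcard := Finset.card_le_card hsub
      rw [Finset.card_insert_of_notMem (by simp; omega)] at hcard
      have h2 := hG.2
      simp only [psi] at h2 ⊢
      omega
    obtain ⟨m'', _, hG''⟩ := exists_G (Y := Y) (ω := ω) (n := n + 1) (M := m + j) (by omega)
    exact ⟨m'', hG''.1, hG''.2⟩

lemma D_antitone : Antitone (fun n => D Y n) := by
  apply antitone_nat_of_succ_le
  intro n
  rw [D_succ_eq]
  exact Set.iUnion_mono fun m => Set.inter_subset_left

lemma mem_D_of_ncard {ω : Ω} {n : ℕ} (hfin : (unc Y ω).Finite)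
    (hn : n + 1 ≤ (unc Y ω).ncard) : ω ∈ D Y n := by
  rcases (unc_finite_iff ω).mp hfin with ⟨M, hM⟩
  have hsub : unc Y ω ⊆ Set.Iic M := by
    intro x hx; by_contra h; exact hM x (by simpa using h) hx
  have hψ : psi Y M ω = (unc Y ω).ncard := by
    rw [psi_eq_ncard, Set.inter_eq_self_of_subset_left hsub]
  obtain ⟨m, _, hG⟩ := exists_G (Y := Y) (ω := ω) (n := n) (M := M) (by omega)
  exact Set.mem_iUnion.mpr ⟨m, hG⟩

lemma mem_D_of_infinite {ω : Ω} (hinf : (unc Y ω).Infinite) (n : ℕ) : ω ∈ D Y n := by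
  obtain ⟨s, hsub, hcard⟩ := hinf.exists_subset_card_eq (n + 1)
  rcases s.eq_empty_or_nonempty with rfl | hne
  · simp at hcard
  have hM : (s.max' hne) ∈ unc Y ω := hsub (s.max'_mem hne)
  have hψ : n + 1 ≤ psi Y (s.max' hne) ω := by
    have hsub2 : s ⊆ (Finset.Iic (s.max' hne)).filter (fun x => x ∈ unc Y ω) := by
      intro x hx
      simp only [Finset.mem_filter, Finset.mem_Iic]
      exact ⟨s.le_max' x hx, hsub hx⟩
    have := Finset.card_le_card hsub2
    simp only [psi]; omega
  obtain ⟨m, _, hG⟩ := exists_G hψ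
  exact Set.mem_iUnion.mpr ⟨m, hG⟩

lemma iInter_D_subset : ⋂ n, D Y n ⊆ {ω | (unc Y ω).Infinite} := by
  intro ω hω
  simp only [Set.mem_iInter] at hω
  by_contra hfin
  simp only [Set.mem_setOf_eq, Set.not_infinite] at hfin
  obtain ⟨m, hG⟩ := Set.mem_iUnion.mp (hω ((unc Y ω).ncard))
  have h1 : psi Y m ω ≤ (unc Y ω).ncard := by
    rw [psi_eq_ncard]
    exact Set.ncard_le_ncard Set.inter_subset_left hfin
  have := hG.2
  omega

section Meas

variable (Y) in
/-- σ-algebra generated by `Y k`, `k ≤ m`. -/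
def Mle (m : ℕ) : MeasurableSpace Ω := ⨆ k ∈ Set.Iic m, MeasurableSpace.comap (Y k) ⊤

variable (Y) in
/-- σ-algebra generated by `Y k`, `k > m`. -/
def Mgt (m : ℕ) : MeasurableSpace Ω := ⨆ k ∈ (Set.Iic m)ᶜ, MeasurableSpace.comap (Y k) ⊤

lemma measurableSet_comap (k : ℕ) (A : Set ℕ) :
    MeasurableSet[MeasurableSpace.comap (Y k) ⊤] (Y k ⁻¹' A) := ⟨A, trivial, rfl⟩

lemma comap_le_Mle {k m : ℕ} (hk : k ≤ m) :
    MeasurableSpace.comap (Y k) ⊤ ≤ Mle Y m :=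
  le_iSup₂ (f := fun k (_ : k ∈ Set.Iic m) => MeasurableSpace.comap (Y k) ⊤) k hk

lemma comap_le_Mgt {k m : ℕ} (hk : m < k) :
    MeasurableSpace.comap (Y k) ⊤ ≤ Mgt Y m :=
  le_iSup₂ (f := fun k (_ : k ∈ (Set.Iic m)ᶜ) => MeasurableSpace.comap (Y k) ⊤) k
    (by simpa using hk)

lemma mem_unc_meas {x m : ℕ} (hx : x ≤ m) :
    MeasurableSet[Mle Y m] {ω | x ∈ unc Y ω} := by
  have : {ω | x ∈ unc Y ω} = ⋂ k, ⋂ (_ : k ≤ x), Y k ⁻¹' {v | v + k ≤ x} := by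
    ext ω; simp [unc, Set.mem_iInter]
  rw [this]
  exact MeasurableSet.iInter fun k => MeasurableSet.iInter fun hk =>
    comap_le_Mle (hk.trans hx) _ (measurableSet_comap k _)

lemma G_meas_Mle (n m : ℕ) : MeasurableSet[Mle Y m] (G Y n m) := by
  have hpsi : @Measurable Ω ℕ (Mle Y m) ⊤ (psi Y m) := by
    have h : psi Y m = fun ω => ∑ x ∈ Finset.Iic m, if x ∈ unc Y ω then 1 else 0 := by
      funext ω; exact Finset.card_filter _ _
    rw [h]
    exact Finset.measurable_sum _ fun x hx =>
      Measurable.ite (mem_unc_meas (Finset.mem_Iic.mp hx)) measurable_const measurable_const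
  have : G Y n m = {ω | m ∈ unc Y ω} ∩ psi Y m ⁻¹' {n + 1} := rfl
  rw [this]
  exact (mem_unc_meas le_rfl).inter (hpsi (measurableSet_singleton _))

lemma B_meas_Mgt (m : ℕ) : MeasurableSet[Mgt Y m] (B Y m) := by
  have hC : ∀ j, MeasurableSet[Mgt Y m] (C Y m j) := by
    intro j
    have : C Y m j = ⋂ i, ⋂ (_ : 1 ≤ i), ⋂ (_ : i ≤ j), Y (m + i) ⁻¹' {v | v + i ≤ j} := by
      ext ω; simp [C, Set.mem_iInter]
    rw [this]
    exact MeasurableSet.iInter fun i => MeasurableSet.iInter fun hi =>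
      MeasurableSet.iInter fun _ =>
        comap_le_Mgt (by omega) _ (measurableSet_comap _ _)
  exact MeasurableSet.iUnion fun j => MeasurableSet.iUnion fun _ => hC j

variable (hYmeas : ∀ x, Measurable (Y x))
include hYmeas

lemma Mle_le (m : ℕ) : Mle Y m ≤ ‹MeasurableSpace Ω› :=
  iSup₂_le fun k _ => (hYmeas k).comap_le

lemma Mgt_le (m : ℕ) : Mgt Y m ≤ ‹MeasurableSpace Ω› :=
  iSup₂_le fun k _ => (hYmeas k).comap_le

lemma G_meas (n m : ℕ) : MeasurableSet (G Y n m) := Mle_le hYmeas m _ (G_meas_Mle n m)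

lemma B_meas (m : ℕ) : MeasurableSet (B Y m) := Mgt_le hYmeas m _ (B_meas_Mgt m)

lemma D_meas (n : ℕ) : MeasurableSet (D Y n) :=
  MeasurableSet.iUnion fun m => G_meas hYmeas n m

lemma finite_event_meas : MeasurableSet {ω | (unc Y ω).Finite} := by
  have h : {ω | (unc Y ω).Finite} = ⋃ M, ⋂ x, ⋂ (_ : M < x), {ω | x ∈ unc Y ω}ᶜ := by
    ext ω
    simp only [Set.mem_setOf_eq, Set.mem_iUnion, Set.mem_iInter, Set.mem_compl_iff,
      unc_finite_iff]
  rw [h]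
  exact MeasurableSet.iUnion fun M => MeasurableSet.iInter fun x => MeasurableSet.iInter
    fun hx => (Mle_le hYmeas x _ (mem_unc_meas le_rfl)).compl

end Meas

section Indep

variable {P : Measure Ω} [IsProbabilityMeasure P]
variable (hYmeas : ∀ x, Measurable (Y x))
variable (hYindep : iIndepFun Y P)
include hYmeas hYindep

lemma measure_G_inter_B (n m : ℕ) :
    P (G Y n m ∩ B Y m) = P (G Y n m) * P (B Y m) := by
  have h := indep_biSup_compl (fun k => (hYmeas k).comap_le)
    ((iIndepFun_iff_iIndep _ _ _).mp hYindep) (Set.Iic m)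
  rw [Indep_iff] at h
  exact h _ _ (G_meas_Mle n m) (B_meas_Mgt m)

end Indep

section Shift

variable (Y) in
/-- Atom event for a tuple of values of `Y (m+1), ..., Y (m+J)`. -/
def atom (m J : ℕ) (t : Fin J → ℕ) : Set Ω := ⋂ i : Fin J, Y (m + 1 + i) ⁻¹' {t i}

/-- The tuples realizing the truncated event `Ecal`. -/
def pred (J : ℕ) (t : Fin J → ℕ) : Prop :=
  ∃ j, 1 ≤ j ∧ j ≤ J ∧ ∀ i : Fin J, (i : ℕ) + 1 ≤ j → t i + ((i : ℕ) + 1) ≤ j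

lemma Ecal_eq_iUnion_atom (m J : ℕ) :
    Ecal Y m J = ⋃ (t : {t : Fin J → ℕ // pred J t}), atom Y m J t.1 := by
  ext ω
  simp only [Ecal, Set.mem_iUnion, atom, Set.mem_iInter, Set.mem_preimage,
    Set.mem_singleton_iff]
  constructor
  · rintro ⟨j, ⟨hj1, hjJ⟩, hC⟩
    refine ⟨⟨fun i => Y (m + 1 + i) ω, ⟨j, hj1, hjJ, fun i hi => ?_⟩⟩, fun i => rfl⟩
    have := hC ((i : ℕ) + 1) (by omega) hi
    have harith : m + ((i : ℕ) + 1) = m + 1 + (i : ℕ) := by omega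
    rw [harith] at this
    exact this
  · rintro ⟨⟨t, ⟨j, hj1, hjJ, hpred⟩⟩, hatom⟩
    refine ⟨j, ⟨hj1, hjJ⟩, fun i hi1 hij => ?_⟩
    have hiJ : i - 1 < J := by omega
    have ht := hpred ⟨i - 1, hiJ⟩ (by simp; omega)
    have ha := hatom ⟨i - 1, hiJ⟩
    simp only at ht ha
    have harith : m + 1 + (i - 1) = m + i := by omega
    rw [harith] at ha
    rw [ha]
    omega

lemma atom_meas (hYmeas : ∀ x, Measurable (Y x)) (m J : ℕ) (t : Fin J → ℕ) :
    MeasurableSet (atom Y m J t) :=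
  MeasurableSet.iInter fun i => (hYmeas _) (by trivial)

variable {μ : ℕ → ℝ} {P : Measure Ω} [IsProbabilityMeasure P]
variable (hYindep : iIndepFun Y P)
variable (hYdist : ∀ x k, P {ω | Y x ω = k} = ENNReal.ofReal (μ k))
include hYindep hYdist

lemma atom_measure (m J : ℕ) (t : Fin J → ℕ) :
    P (atom Y m J t) = ∏ i : Fin J, ENNReal.ofReal (μ (t i)) := by
  classical
  set tt : ℕ → ℕ := fun k => if h : k - (m + 1) < J then t ⟨k - (m + 1), h⟩ else 0 with htt
  have httv : ∀ (i : ℕ) (h : i < J), tt (m + 1 + i) = t ⟨i, h⟩ := by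
    intro i h
    have : m + 1 + i - (m + 1) = i := by omega
    simp only [htt, this, dif_pos h]
  set S : Finset ℕ := (Finset.range J).image (fun i => m + 1 + i) with hS
  set s : ℕ → Set Ω := fun k => Y k ⁻¹' {tt k} with hs
  have h1 : atom Y m J t = ⋂ k ∈ S, s k := by
    ext ω
    simp only [atom, Set.mem_iInter, Set.mem_preimage, Set.mem_singleton_iff, hS, hs,
      Finset.mem_image, Finset.mem_range]
    constructor
    · rintro h k ⟨i, hi, rfl⟩
      rw [httv i hi]; exact h ⟨i, hi⟩
    · intro h i
      have := h (m + 1 + i) ⟨i, i.2, rfl⟩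
      rwa [httv i i.2] at this
  have h2 : P (atom Y m J t) = ∏ k ∈ S, P (s k) := by
    rw [h1]
    exact hYindep.meas_biInter fun k _ => ⟨{tt k}, trivial, rfl⟩
  have h3 : ∀ k, P (s k) = ENNReal.ofReal (μ (tt k)) := by
    intro k
    have : s k = {ω | Y k ω = tt k} := rfl
    rw [this, hYdist]
  rw [h2]
  have h4 : ∏ k ∈ S, P (s k) = ∏ i ∈ Finset.range J, P (s (m + 1 + i)) :=
    Finset.prod_image (fun a _ b _ h => by omega)
  rw [h4, ← Fin.prod_univ_eq_prod_range (fun i => P (s (m + 1 + i))) J]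
  refine Finset.prod_congr rfl fun i _ => ?_
  rw [h3, httv i.1 i.2, Fin.eta]

lemma Ecal_measure (hYmeas : ∀ x, Measurable (Y x)) (m J : ℕ) :
    P (Ecal Y m J) =
      ∑' (t : {t : Fin J → ℕ // pred J t}), ∏ i : Fin J, ENNReal.ofReal (μ (t.1 i)) := by
  rw [Ecal_eq_iUnion_atom]
  rw [measure_iUnion ?hd ?hm]
  · exact tsum_congr fun t => atom_measure hYindep hYdist m J t.1
  case hd =>
    intro t u htu
    have : ∃ i, t.1 i ≠ u.1 i := by
      by_contra h
      push_neg at h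
      exact htu (Subtype.ext (funext h))
    obtain ⟨i, hi⟩ := this
    simp only [Function.onFun, Set.disjoint_left]
    intro ω hω hω'
    simp only [atom, Set.mem_iInter, Set.mem_preimage, Set.mem_singleton_iff] at hω hω'
    exact hi ((hω i).symm.trans (hω' i))
  case hm =>
    intro t
    exact atom_meas hYmeas m J t.1

omit hYindep hYdist in
lemma B_eq_iUnion_Ecal (m : ℕ) : B Y m = ⋃ J, Ecal Y m J := by
  ext ω
  simp only [B, Ecal, Set.mem_iUnion]
  constructor
  · rintro ⟨j, hj, hC⟩
    exact ⟨j, j, ⟨hj, le_rfl⟩, hC⟩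
  · rintro ⟨J, j, ⟨hj, _⟩, hC⟩
    exact ⟨j, hj, hC⟩

omit hYindep hYdist in
lemma Ecal_mono (m : ℕ) : Monotone (fun J => Ecal Y m J) := by
  intro J J' hJ
  apply Set.iUnion_mono fun j => ?_
  exact Set.iUnion_mono' fun h => ⟨⟨h.1, h.2.trans hJ⟩, subset_rfl⟩

lemma measure_B_eq (hYmeas : ∀ x, Measurable (Y x)) (m : ℕ) : P (B Y m) = P (B Y 0) := by
  rw [B_eq_iUnion_Ecal m, B_eq_iUnion_Ecal 0,
    Directed.measure_iUnion ((Ecal_mono m).directed_le),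
    Directed.measure_iUnion ((Ecal_mono 0).directed_le)]
  exact iSup_congr fun J => by
    rw [Ecal_measure hYindep hYdist hYmeas m J, Ecal_measure hYindep hYdist hYmeas 0 J]

end Shift

section Main

variable {μ : ℕ → ℝ} {P : Measure Ω} [IsProbabilityMeasure P]
variable (hYmeas : ∀ x, Measurable (Y x))
variable (hYindep : iIndepFun Y P)
variable (hYdist : ∀ x k, P {ω | Y x ω = k} = ENNReal.ofReal (μ k))
include hYmeas hYindep hYdist

lemma measure_D_succ (n : ℕ) : P (D Y (n+1)) = P (D Y n) * P (B Y 0) := by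
  rw [D_succ_eq]
  rw [measure_iUnion (fun m m' hne => ((G_disjoint n) hne).mono Set.inter_subset_left
      Set.inter_subset_left)
    (fun m => (G_meas hYmeas n m).inter (B_meas hYmeas m))]
  have h : ∀ m, P (G Y n m ∩ B Y m) = P (G Y n m) * P (B Y 0) := fun m => by
    rw [measure_G_inter_B hYmeas hYindep, measure_B_eq hYindep hYdist hYmeas]
  rw [tsum_congr h, ENNReal.tsum_mul_right,
    ← measure_iUnion (G_disjoint n) (fun m => G_meas hYmeas n m)]
  rfl

lemma measure_D_le_pow (n : ℕ) : P (D Y n) ≤ P (B Y 0) ^ n := by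
  induction n with
  | zero => simpa using prob_le_one
  | succ n ih =>
      rw [measure_D_succ hYmeas hYindep hYdist n, pow_succ]
      exact mul_le_mul_left ih _

lemma r_lt_one (hμ0pos : 0 < μ 0) (hfin' : P {ω | (unc Y ω).Finite} = 1) :
    P (B Y 0) < 1 := by
  by_contra hr
  have hr1 : P (B Y 0) = 1 := le_antisymm prob_le_one (not_lt.mp hr)
  have hD0 : ENNReal.ofReal (μ 0) ≤ P (D Y 0) := by
    rw [← hYdist 0 0]
    apply measure_mono
    intro ω (hω : Y 0 ω = 0)
    have h0 : 0 ∈ unc Y ω := by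
      intro k hk
      have : k = 0 := by omega
      subst this; omega
    refine Set.mem_iUnion.mpr ⟨0, h0, ?_⟩
    have : (Finset.Iic 0).filter (fun x => x ∈ unc Y ω) = {0} := by
      ext x
      simp only [Finset.mem_filter, Finset.mem_Iic, Nat.le_zero, Finset.mem_singleton]
      constructor
      · rintro ⟨rfl, _⟩; rfl
      · rintro rfl; exact ⟨rfl, h0⟩
    simp [psi, this]
  have hconst : ∀ n, P (D Y n) = P (D Y 0) := by
    intro n
    induction n with
    | zero => rfl
    | succ n ih => rw [measure_D_succ hYmeas hYindep hYdist n, hr1, mul_one, ih]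
  have hInter : P (⋂ n, D Y n) = P (D Y 0) := by
    rw [Directed.measure_iInter (fun n => (D_meas hYmeas n).nullMeasurableSet)
      (D_antitone.directed_ge) ⟨0, measure_ne_top P _⟩]
    simp [hconst]
  have hzero : P (⋂ n, D Y n) = 0 := by
    have hsub : (⋂ n, D Y n) ⊆ {ω | (unc Y ω).Finite}ᶜ := by
      intro ω hω
      have := iInter_D_subset hω
      simp only [Set.mem_setOf_eq] at this
      simp only [Set.mem_compl_iff, Set.mem_setOf_eq]
      exact this
    refine le_antisymm ?_ zero_le
    calc P (⋂ n, D Y n) ≤ P {ω | (unc Y ω).Finite}ᶜ := measure_mono hsub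
      _ = 1 - P {ω | (unc Y ω).Finite} := by
          rw [measure_compl (finite_event_meas hYmeas) (measure_ne_top P _), measure_univ]
      _ = 0 := by rw [hfin']; simp
  rw [hInter] at hzero
  have : (0 : ℝ≥0∞) < ENNReal.ofReal (μ 0) := ENNReal.ofReal_pos.mpr hμ0pos
  rw [hzero] at hD0
  exact absurd hD0 (by simpa using this)

end Main

lemma unc_eq (ω : Ω) : {m : ℕ | ¬ ∃ k ≤ m, m - k < Y k ω} = unc Y ω := by
  ext m
  simp only [Set.mem_setOf_eq, unc]
  constructor
  · intro h k hk
    push_neg at h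
    have := h k hk
    omega
  · intro h
    push_neg
    intro k hk
    have := h k hk
    omega

end BP

/-- For Boolean percolation on the directed graph `ℕ₀`
(edges `(x, x+1)`), if the set of uncovered vertices is finite almost surely,
then the number of uncovered vertices has a finite exponential moment:
`E[exp(α · #V_μ^c(ℕ₀))] < ∞` for some `α > 0`. -/
theorem boolean_percolation_N_exponential_moment
    (μ : ℕ → ℝ) (hμnonneg : ∀ n, 0 ≤ μ n) (hμsum : ∑' n, μ n = 1)
    (hμ0pos : 0 < μ 0) (hμ0lt : μ 0 < 1)
    (Ω : Type*) [MeasurableSpace Ω] (P : Measure Ω) [IsProbabilityMeasure P]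
    (Y : ℕ → Ω → ℕ) (hYmeas : ∀ x, Measurable (Y x))
    (hYindep : iIndepFun Y P)
    (hYdist : ∀ x k, P {ω | Y x ω = k} = ENNReal.ofReal (μ k))
    (hfin : P {ω | {m : ℕ | ¬ ∃ k ≤ m, m - k < Y k ω}.Finite} = 1) :
    ∃ α : ℝ, 0 < α ∧
      ∫⁻ ω, (if {m : ℕ | ¬ ∃ k ≤ m, m - k < Y k ω}.Finite then
        ENNReal.ofReal (Real.exp (α * ({m : ℕ | ¬ ∃ k ≤ m, m - k < Y k ω}.ncard : ℝ)))
        else ⊤) ∂P < ⊤ := by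
  classical
  have hfin' : P {ω | (BP.unc Y ω).Finite} = 1 := by
    rw [← hfin]
    congr 1
    ext ω
    rw [Set.mem_setOf_eq, Set.mem_setOf_eq, BP.unc_eq]
  set r : ℝ≥0∞ := P (BP.B Y 0) with hr
  have hrlt : r < 1 := BP.r_lt_one hYmeas hYindep hYdist hμ0pos hfin'
  have hrtop : r ≠ ⊤ := (hrlt.trans ENNReal.one_lt_top).ne
  set ρ : ℝ := max r.toReal (1/2) with hρ
  have hρpos : (0:ℝ) < ρ := lt_of_lt_of_le (by norm_num) (le_max_right _ _)
  have hρlt : ρ < 1 := by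
    apply max_lt ?_ (by norm_num)
    have := (ENNReal.toReal_lt_toReal hrtop ENNReal.one_ne_top).mpr hrlt
    simpa using this
  have hrρ : r ≤ ENNReal.ofReal ρ := by
    rw [← ENNReal.ofReal_toReal hrtop]
    exact ENNReal.ofReal_le_ofReal (le_max_left _ _)
  set α : ℝ := -(Real.log ρ) / 2 with hα
  have hlogneg : Real.log ρ < 0 := Real.log_neg hρpos hρlt
  have hαpos : 0 < α := by rw [hα]; linarith
  have hq : Real.exp α * ρ < 1 := by
    have he : Real.exp α * ρ = Real.exp (α + Real.log ρ) := by
      rw [Real.exp_add, Real.exp_log hρpos]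
    rw [he]
    apply Real.exp_lt_one_iff.mpr
    rw [hα]
    linarith
  refine ⟨α, hαpos, ?_⟩
  set c : ℕ → ℝ≥0∞ :=
    fun n => ENNReal.ofReal (Real.exp (α * (n+1)) - Real.exp (α * n)) with hc
  have hmono_exp : ∀ n : ℕ, Real.exp (α * n) ≤ Real.exp (α * (n+1)) := by
    intro n
    apply Real.exp_le_exp.mpr
    have : (0:ℝ) ≤ α := hαpos.le
    nlinarith [Nat.cast_nonneg (α := ℝ) n]
  have hone_le : ∀ n : ℕ, (1:ℝ) ≤ Real.exp (α * n) := fun n =>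
    Real.one_le_exp (by positivity)
  -- pointwise bound
  have hptwise : ∀ ω : Ω, (if {m : ℕ | ¬ ∃ k ≤ m, m - k < Y k ω}.Finite then
        ENNReal.ofReal (Real.exp (α * ({m : ℕ | ¬ ∃ k ≤ m, m - k < Y k ω}.ncard : ℝ)))
        else ⊤) ≤ 1 + ∑' n, (BP.D Y n).indicator (fun _ => c n) ω := by
    intro ω
    rw [BP.unc_eq (Y := Y) ω]
    by_cases hf : (BP.unc Y ω).Finite
    · rw [if_pos hf]
      set N := (BP.unc Y ω).ncard with hN
      have hsum : ∑ n ∈ Finset.range N, c n = ENNReal.ofReal (Real.exp (α * N) - 1) := by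
        rw [← ENNReal.ofReal_sum_of_nonneg (fun n _ => sub_nonneg.mpr (hmono_exp n))]
        congr 1
        have h := Finset.sum_range_sub (fun n : ℕ => Real.exp (α * n)) N
        simp only [Nat.cast_zero, mul_zero, Real.exp_zero, Nat.cast_add, Nat.cast_one] at h
        exact h
      have hle : ENNReal.ofReal (Real.exp (α * N) - 1) ≤
          ∑' n, (BP.D Y n).indicator (fun _ => c n) ω := by
        rw [← hsum]
        calc ∑ n ∈ Finset.range N, c n
            = ∑ n ∈ Finset.range N, (BP.D Y n).indicator (fun _ => c n) ω := by
              apply Finset.sum_congr rfl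
              intro n hn
              rw [Set.indicator_of_mem
                (BP.mem_D_of_ncard hf (by rw [← hN]; simp only [Finset.mem_range] at hn; omega))]
          _ ≤ _ := ENNReal.sum_le_tsum _
      calc ENNReal.ofReal (Real.exp (α * N))
          = 1 + ENNReal.ofReal (Real.exp (α * N) - 1) := by
            rw [← ENNReal.ofReal_one,
              ← ENNReal.ofReal_add (by norm_num) (sub_nonneg.mpr (hone_le N))]
            congr 1
            ring
        _ ≤ 1 + ∑' n, (BP.D Y n).indicator (fun _ => c n) ω := add_le_add_right hle 1
    · rw [if_neg hf]
      have hmem : ∀ n, ω ∈ BP.D Y n := BP.mem_D_of_infinite hf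
      have htop : ∑' n, (BP.D Y n).indicator (fun _ => c n) ω = ⊤ := by
        rw [tsum_congr (fun n => Set.indicator_of_mem (hmem n) _)]
        refine top_le_iff.mp ?_
        have hc0 : ∀ n : ℕ, ENNReal.ofReal (Real.exp α - 1) ≤ c n := by
          intro n
          apply ENNReal.ofReal_le_ofReal
          have he : Real.exp (α * (n+1)) = Real.exp (α * n) * Real.exp α := by
            rw [← Real.exp_add]; congr 1; push_cast; ring
          have h1 := hone_le n
          have h2 : (1:ℝ) ≤ Real.exp α := Real.one_le_exp hαpos.le
          rw [he]
          nlinarith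
        have hgt : (1:ℝ) < Real.exp α := Real.one_lt_exp_iff.mpr hαpos
        have hne : ENNReal.ofReal (Real.exp α - 1) ≠ 0 :=
          (ENNReal.ofReal_pos.mpr (by linarith)).ne'
        calc (⊤ : ℝ≥0∞) = ∑' _ : ℕ, ENNReal.ofReal (Real.exp α - 1) :=
              (ENNReal.tsum_const_eq_top_of_ne_zero hne).symm
          _ ≤ ∑' n, c n := ENNReal.tsum_le_tsum hc0
      rw [htop]
      simp
  have hDmeas : ∀ n, MeasurableSet (BP.D Y n) := fun n => BP.D_meas hYmeas n
  calc ∫⁻ ω, (if {m : ℕ | ¬ ∃ k ≤ m, m - k < Y k ω}.Finite then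
        ENNReal.ofReal (Real.exp (α * ({m : ℕ | ¬ ∃ k ≤ m, m - k < Y k ω}.ncard : ℝ)))
        else ⊤) ∂P
      ≤ ∫⁻ ω, (1 + ∑' n, (BP.D Y n).indicator (fun _ => c n) ω) ∂P :=
        lintegral_mono hptwise
    _ = 1 + ∑' n, c n * P (BP.D Y n) := by
        rw [lintegral_add_left measurable_const, lintegral_const, measure_univ, mul_one,
          lintegral_tsum (fun n => (measurable_const.indicator (hDmeas n)).aemeasurable)]
        congr 1
        exact tsum_congr fun n => lintegral_indicator_const (hDmeas n) (c n)
    _ ≤ 1 + ∑' n : ℕ, ENNReal.ofReal (Real.exp α) * (ENNReal.ofReal (Real.exp α * ρ))^n := by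
        apply add_le_add_right
        apply ENNReal.tsum_le_tsum
        intro n
        have h1 : c n ≤ ENNReal.ofReal (Real.exp (α * (n+1))) :=
          ENNReal.ofReal_le_ofReal (by nlinarith [Real.exp_pos (α * (n:ℝ))])
        have h2 : P (BP.D Y n) ≤ (ENNReal.ofReal ρ)^n := by
          calc P (BP.D Y n) ≤ r ^ n := BP.measure_D_le_pow hYmeas hYindep hYdist n
            _ ≤ (ENNReal.ofReal ρ)^n := pow_le_pow_left' hrρ n
        calc c n * P (BP.D Y n) ≤ ENNReal.ofReal (Real.exp (α * (n+1))) * (ENNReal.ofReal ρ)^n :=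
              mul_le_mul' h1 h2
          _ = ENNReal.ofReal (Real.exp α) * (ENNReal.ofReal (Real.exp α * ρ))^n := by
              rw [show α * ((n:ℝ)+1) = α + (n:ℝ) * α by ring, Real.exp_add, Real.exp_nat_mul,
                ENNReal.ofReal_mul (Real.exp_pos α).le,
                ENNReal.ofReal_mul (Real.exp_pos α).le, mul_pow,
                ← ENNReal.ofReal_pow (Real.exp_pos α).le]
              ring
    _ < ⊤ := by
        rw [ENNReal.tsum_mul_left, ENNReal.tsum_geometric]
        refine ENNReal.add_lt_top.mpr ⟨ENNReal.one_lt_top, ENNReal.mul_lt_top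
          ENNReal.ofReal_lt_top ?_⟩
        rw [lt_top_iff_ne_top]
        apply ENNReal.inv_ne_top.mpr
        intro h0
        have hq1 : ENNReal.ofReal (Real.exp α * ρ) < 1 := ENNReal.ofReal_lt_one.mpr hq
        rw [tsub_eq_zero_iff_le] at h0
        exact absurd (h0.trans_lt hq1) (lt_irrefl _)
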